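/- arXiv:2207.07046 — 2 statements merged into one kernel-verified Lean document; each statement's English description precedes it below -/
import Mathlib

section
/- For every integer m ≥ 4, the number of 4-tuples (a,b,c,d) of elements of {1,...,m} satisfying a < c < m, b < d < m, b ≠ c, a ≠ d, a ≠ b, and c ≠ d equals (m-1)(m-2)(m-3)(m-4)/4. -/
/-!
Regrouping `(a, b, c, d)` as the pairs `(a, c)` and `(b, d)`, the tuples counted are exactly two
disjoint strictly increasing pairs in `{1, …, m - 1}`: `C(m - 1, 2)` choices for the first and
`C(m - 3, 2)` for the second, and `C(n, 2) * C(n - 2, 2) = n (n - 1) (n - 2) (n - 3) / 4`.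
-/

namespace Finset

variable {α : Type*} [LinearOrder α]

def disjointLtPairs (s : Finset α) : Finset ((α × α) × α × α) :=
  {q ∈ (s ×ˢ s) ×ˢ (s ×ˢ s) | q.1.1 < q.1.2 ∧ q.2.1 < q.2.2 ∧
    q.2.1 ∉ ({q.1.1, q.1.2} : Finset α) ∧ q.2.2 ∉ ({q.1.1, q.1.2} : Finset α)}

theorem filter_disjointLtPairs_fst_eq {s : Finset α} {p : α × α}
    (hp : p ∈ {x ∈ s ×ˢ s | x.1 < x.2}) :
    {q ∈ disjointLtPairs s | q.1 = p} =
      {p} ×ˢ {r ∈ (s \ {p.1, p.2}) ×ˢ (s \ {p.1, p.2}) | r.1 < r.2} := by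
  obtain ⟨a, c⟩ := p
  simp only [mem_filter, mem_product] at hp
  ext ⟨⟨a', c'⟩, b, d⟩
  simp only [disjointLtPairs, mem_filter, mem_product, mem_singleton, mem_sdiff, mem_insert,
    Prod.mk.injEq]
  grind

theorem card_disjointLtPairs (s : Finset α) :
    #(disjointLtPairs s) = (#s).choose 2 * (#s - 2).choose 2 := by
  have hfst : Set.MapsTo Prod.fst (disjointLtPairs s : Set ((α × α) × α × α))
      ({x ∈ s ×ˢ s | x.1 < x.2} : Finset (α × α)) := by
    intro q hq
    simp only [disjointLtPairs, coe_filter, mem_product, Set.mem_ofPred_eq] at hq ⊢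
    exact ⟨hq.1.1, hq.2.1⟩
  rw [card_eq_sum_card_fiberwise hfst, ← card_product_filter_lt, ← smul_eq_mul, ← sum_const]
  refine sum_congr rfl fun p hp => ?_
  rw [filter_disjointLtPairs_fst_eq hp, card_product, card_singleton, one_mul,
    card_product_filter_lt]
  simp only [mem_filter, mem_product] at hp
  rw [card_sdiff_of_subset (insert_subset hp.1.1 (singleton_subset_iff.2 hp.1.2)),
    card_pair hp.2.ne]

end Finset

theorem Nat.choose_two_mul_choose_two_sub_two (n : ℕ) :
    n.choose 2 * (n - 2).choose 2 = n * (n - 1) * (n - 2) * (n - 3) / 4 := by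
  have h : n - 2 - 1 = n - 3 := by omega
  rw [Nat.choose_two_right, Nat.choose_two_right, h,
    Nat.div_mul_div_comm (even_mul_pred_self n).two_dvd (h ▸ (even_mul_pred_self (n - 2)).two_dvd)]
  ring_nf

open Finset in
theorem stmt_2_general (m : ℕ) :
    (((Icc 1 m ×ˢ Icc 1 m) ×ˢ (Icc 1 m ×ˢ Icc 1 m)).filter
        (fun q => q.1.1 < q.2.1 ∧ q.2.1 < m ∧ q.1.2 < q.2.2 ∧ q.2.2 < m ∧
          q.1.2 ≠ q.2.1 ∧ q.1.1 ≠ q.2.2 ∧ q.1.1 ≠ q.1.2 ∧ q.2.1 ≠ q.2.2)).card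
      = (m - 1) * (m - 2) * (m - 3) * (m - 4) / 4 := by
  rw [card_equiv (Equiv.prodProdProdComm ℕ ℕ ℕ ℕ) (t := disjointLtPairs (Ico 1 m)),
    card_disjointLtPairs, Nat.card_Ico, Nat.choose_two_mul_choose_two_sub_two]
  · simp only [Nat.sub_sub]
  · rintro ⟨⟨a, b⟩, c, d⟩
    simp only [disjointLtPairs, Equiv.prodProdProdComm_apply, mem_filter, mem_product,
      mem_Icc, mem_Ico, mem_insert, mem_singleton]
    omega

open Finset in
/-- The number of 4-tuples `(a,b,c,d)` in `{1,...,m}` with `a < c < m`, `b < d < m`,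
`b ≠ c`, `a ≠ d`, `a ≠ b`, `c ≠ d` equals `(m-1)(m-2)(m-3)(m-4)/4`. -/
theorem stmt_2 (m : ℕ) (hm : 4 ≤ m) :
    (((Icc 1 m ×ˢ Icc 1 m) ×ˢ (Icc 1 m ×ˢ Icc 1 m)).filter
        (fun q => q.1.1 < q.2.1 ∧ q.2.1 < m ∧ q.1.2 < q.2.2 ∧ q.2.2 < m ∧
          q.1.2 ≠ q.2.1 ∧ q.1.1 ≠ q.2.2 ∧ q.1.1 ≠ q.1.2 ∧ q.2.1 ≠ q.2.2)).card
      = (m - 1) * (m - 2) * (m - 3) * (m - 4) / 4 :=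
  stmt_2_general m
end

section
/- Let A be a commutative ring of characteristic 2 (e.g., the mod 2 cohomology of a space, concentrated so that all products commute), let s ≥ 2, and let x, y, z, w ∈ A satisfy x² = y² = xz = yz = yw = 0. In the s-fold tensor product algebra A^{⊗s}, writing u_{(i)} for the elementary tensor with u in the i-th slot and 1 elsewhere, one has (∏_{i=2}^{s} (x_{(1)} + x_{(i)})) · (∏_{i=2}^{s} (y_{(1)} + y_{(i)})) · (z_{(1)} + z_{(s)}) · (w_{(1)} + w_{(s)}) = zw ⊗ xy ⊗ xy ⊗ ⋯ ⊗ xy + xy ⊗ xy ⊗ ⋯ ⊗ xy ⊗ zw. -/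
/-!
Multiplying an elementary tensor `g` by `u₍i₎` multiplies its `i`-th slot by `u`. So if
`u * g a = 0`, every term of `(∏ i ∈ S, (u₍a₎ + u₍i₎)) * g` containing a factor `u₍a₎` vanishes,
and the product merely multiplies the slots in `S` by `u`.

In the formula, `yz = yw = 0` lets the factor `y₍a₎ + y₍b₎` kill the cross terms `z₍a₎ w₍b₎` and
`z₍b₎ w₍a₎`, leaving `(zw)₍a₎ + (zw)₍b₎`. Absorbing the `y`-product (using `y² = 0`) and then the
`x`-product (using `x² = 0`, `xz = 0`) turns each of these into `zw` in its slot and `xy` elsewhere.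
-/

open Function

namespace PiTensorProduct

variable {R A ι : Type*} [CommSemiring R] [CommSemiring A] [Algebra R A] [DecidableEq ι]

local notation:max u:max "₍" i "₎" => (tprod R (Pi.mulSingle i u : ι → A))

theorem tprod_mulSingle_mul_tprod (i : ι) (u : A) (g : ι → A) :
    u₍i₎ * tprod R g = tprod R (update g i (u * g i)) := by
  rw [tprod_mul_tprod]
  congr 1
  ext j
  by_cases hj : j = i
  · subst hj; simp
  · simp [hj]

theorem tprod_mulSingle_mul_tprod_eq_zero {i : ι} {u : A} {g : ι → A} (h : u * g i = 0) :
    u₍i₎ * tprod R g = 0 := by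
  rw [tprod_mulSingle_mul_tprod, h, MultilinearMap.map_update_zero]

theorem tprod_mulSingle_add_mul_tprod_eq_zero {a b : ι} {u : A} {g : ι → A}
    (ha : u * g a = 0) (hb : u * g b = 0) :
    (u₍a₎ + u₍b₎) * tprod R g = 0 := by
  rw [add_mul, tprod_mulSingle_mul_tprod_eq_zero ha, tprod_mulSingle_mul_tprod_eq_zero hb,
    add_zero]

theorem prod_tprod_mulSingle_add_mul_tprod {a : ι} {S : Finset ι} (ha : a ∉ S) {u : A}
    {g : ι → A} (h : u * g a = 0) :
    (∏ i ∈ S, (u₍a₎ + u₍i₎)) * tprod R g = tprod R (S.piecewise (fun j => u * g j) g) := by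
  induction S using Finset.induction with
  | empty => simp
  | insert c S hc ih =>
    rw [Finset.mem_insert, not_or] at ha
    have hg : S.piecewise (fun j => u * g j) g a = g a := S.piecewise_eq_of_notMem _ _ ha.2
    rw [Finset.prod_insert hc, mul_assoc, ih ha.2, add_mul,
      tprod_mulSingle_mul_tprod_eq_zero (by rw [hg, h]), zero_add, tprod_mulSingle_mul_tprod,
      S.piecewise_eq_of_notMem _ _ hc, Finset.piecewise_insert]

theorem prod_tprod_mulSingle_add_mul_tprod_update_const [Fintype ι] (a c : ι) {u t v : A}
    (hv : u * v = 0) (ht : u * (u * t) = 0) :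
    (∏ i ∈ Finset.univ.erase a, (u₍a₎ + u₍i₎)) * tprod R (update (fun _ => t) c v)
      = tprod R (update (fun _ => u * t) c v) := by
  by_cases hca : c = a
  · subst hca
    rw [prod_tprod_mulSingle_add_mul_tprod (Finset.notMem_erase c _) (by simpa using hv)]
    congr 1
    ext j
    by_cases hj : j = c <;> simp [hj]
  · -- `u₍c₎` meets `v`, so of the factor `u₍a₎ + u₍c₎` only `u₍a₎` survives, putting `u * t`
    -- into slot `a`; the remaining factors are then absorbed since `u * (u * t) = 0`.
    rw [← Finset.mul_prod_erase _ _ (Finset.mem_erase.2 ⟨hca, Finset.mem_univ c⟩),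
      mul_comm (_ + _), mul_assoc, add_mul,
      tprod_mulSingle_mul_tprod_eq_zero (i := c) (by simpa using hv), add_zero,
      tprod_mulSingle_mul_tprod,
      prod_tprod_mulSingle_add_mul_tprod
        (fun h => Finset.notMem_erase a _ (Finset.mem_of_mem_erase h))
        (by simpa [Ne.symm hca] using ht)]
    congr 1
    ext j
    by_cases hjc : j = c
    · subst hjc; simp [hca]
    · by_cases hja : j = a
      · subst hja; simp [hjc]
      · simp [hjc, hja]

theorem tprod_mulSingle_add_mul_mul_eq {a b : ι} (hab : a ≠ b) {y z w : A}
    (hyz : y * z = 0) (hyw : y * w = 0) :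
    (y₍a₎ + y₍b₎) * ((z₍a₎ + z₍b₎) * (w₍a₎ + w₍b₎))
      = (y₍a₎ + y₍b₎) * ((z * w)₍a₎ + (z * w)₍b₎) := by
  have hcross : (y₍a₎ + y₍b₎) * (z₍a₎ * w₍b₎) = 0 ∧ (y₍a₎ + y₍b₎) * (z₍b₎ * w₍a₎) = 0 := by
    simp only [tprod_mul_tprod]
    constructor <;> apply tprod_mulSingle_add_mul_tprod_eq_zero <;>
      simp [hab, hab.symm, hyz, hyw]
  have hdiag : ∀ c : ι, z₍c₎ * w₍c₎ = (z * w)₍c₎ := fun c => by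
    rw [tprod_mul_tprod, ← Pi.mulSingle_mul]
  simp only [add_mul, mul_add, hdiag, hcross.1, hcross.2]
  abel

theorem prod_mul_prod_mul_mul_eq_tprod_add_tprod [Fintype ι] {a b : ι} (hab : a ≠ b) {x y z w : A}
    (hx : x ^ 2 = 0) (hy : y ^ 2 = 0) (hxz : x * z = 0) (hyz : y * z = 0) (hyw : y * w = 0) :
    (∏ i ∈ Finset.univ.erase a, (x₍a₎ + x₍i₎)) * (∏ i ∈ Finset.univ.erase a, (y₍a₎ + y₍i₎)) *
        (z₍a₎ + z₍b₎) * (w₍a₎ + w₍b₎)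
      = tprod R (update (fun _ => x * y) a (z * w))
        + tprod R (update (fun _ => x * y) b (z * w)) := by
  have hzw (u : A) (hu : u * z = 0) : u * (z * w) = 0 := by rw [← mul_assoc, hu, zero_mul]
  have hy' : y * (y * 1) = 0 := by rw [mul_one, ← sq, hy]
  have hx' : x * (x * y) = 0 := by rw [← mul_assoc, ← sq, hx, zero_mul]
  have hPy : ∏ i ∈ Finset.univ.erase a, (y₍a₎ + y₍i₎)
      = (∏ i ∈ (Finset.univ.erase a).erase b, (y₍a₎ + y₍i₎)) * (y₍a₎ + y₍b₎) :=
    (Finset.mul_prod_erase _ _ (Finset.mem_erase.2 ⟨hab.symm, Finset.mem_univ b⟩)).symm.trans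
      (mul_comm _ _)
  calc _ = (∏ i ∈ Finset.univ.erase a, (x₍a₎ + x₍i₎)) *
        ((∏ i ∈ Finset.univ.erase a, (y₍a₎ + y₍i₎)) * ((z₍a₎ + z₍b₎) * (w₍a₎ + w₍b₎))) := by
        simp only [mul_assoc]
    _ = (∏ i ∈ Finset.univ.erase a, (x₍a₎ + x₍i₎)) * ((∏ i ∈ Finset.univ.erase a, (y₍a₎ + y₍i₎)) *
          (tprod R (update (fun _ => 1) a (z * w)) + tprod R (update (fun _ => 1) b (z * w)))) := by
        rw [hPy, mul_assoc, mul_assoc, tprod_mulSingle_add_mul_mul_eq hab hyz hyw]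
        rfl
    _ = _ := by
        rw [mul_add, prod_tprod_mulSingle_add_mul_tprod_update_const _ _ (hzw y hyz) hy',
          prod_tprod_mulSingle_add_mul_tprod_update_const _ _ (hzw y hyz) hy', mul_one, mul_add,
          prod_tprod_mulSingle_add_mul_tprod_update_const _ _ (hzw x hxz) hx',
          prod_tprod_mulSingle_add_mul_tprod_update_const _ _ (hzw x hxz) hx']

end PiTensorProduct

open scoped TensorProduct in
/-- Knudsen-style product formula in the `s`-fold tensor power of a commutative
`𝔽₂`-algebra `A`: if `x² = y² = xz = yz = yw = 0`, then
`(∏ᵢ (x₍₁₎+x₍ᵢ₎)) (∏ᵢ (y₍₁₎+y₍ᵢ₎)) (z₍₁₎+z₍ₛ₎) (w₍₁₎+w₍ₛ₎)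
  = zw ⊗ xy ⊗ ⋯ ⊗ xy + xy ⊗ ⋯ ⊗ xy ⊗ zw`. -/
theorem stmt_8 {A : Type*} [CommRing A] [Algebra (ZMod 2) A]
    (s : ℕ) (hs : 2 ≤ s) (x y z w : A)
    (hx : x ^ 2 = 0) (hy : y ^ 2 = 0) (hxz : x * z = 0) (hyz : y * z = 0)
    (hyw : y * w = 0) :
    letI e : A → Fin s → ⨂[ZMod 2] (_ : Fin s), A :=
      fun u i => PiTensorProduct.tprod (ZMod 2) (fun j => if j = i then u else 1)
    letI one : Fin s := ⟨0, by omega⟩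
    letI last : Fin s := ⟨s - 1, by omega⟩
    (∏ i ∈ Finset.univ.filter (fun i : Fin s => i ≠ one), (e x one + e x i)) *
      (∏ i ∈ Finset.univ.filter (fun i : Fin s => i ≠ one), (e y one + e y i)) *
      (e z one + e z last) * (e w one + e w last)
      = PiTensorProduct.tprod (ZMod 2)
          (fun j : Fin s => if j = one then z * w else x * y)
        + PiTensorProduct.tprod (ZMod 2)
            (fun j : Fin s => if j = last then z * w else x * y) := by
  have hab : (⟨0, by omega⟩ : Fin s) ≠ ⟨s - 1, by omega⟩ := by simp [Fin.ext_iff]; omega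
  have hupd (c : Fin s) :
      (fun j => if j = c then z * w else x * y) = update (fun _ => x * y) c (z * w) :=
    funext fun j => (update_apply (fun _ => x * y) c (z * w) j).symm
  simp only [Finset.filter_ne', ← Pi.mulSingle_apply, hupd]
  exact PiTensorProduct.prod_mul_prod_mul_mul_eq_tprod_add_tprod hab hx hy hxz hyz hyw
end
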